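/- Fix d ≥ 1 and permutations p_x, p_y of Fin d such that the subgroup generated by p_x and p_y acts transitively on Fin d, let p_z := p_x⁻¹ ∘ p_y⁻¹, let (m_A, m_B) be the M-Origami pair associated to (p_x, p_y), and let K := m_A ∘ m_B ∘ m_A⁻¹ ∘ m_B⁻¹. Define the rational numbers g_Y := (2 + d − c(p_x) − c(p_y) − c(p_z))/2 (the Euler-formula genus of the dessin) and g_X := (2 + 4d − c(K))/2 (the Euler-formula genus of the M-Origami), and let g₀ := e(p_x), g₁ := e(p_y), g_∞ := e(p_z). Then g_X = g_Y + d − (g₀ + g₁ + g_∞)/2. -/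
import Mathlib


/-- `m_A` of the M-Origami pair associated to `(p_x, p_y)`
(squares labelled `0,1,2,3` instead of `1,2,3,4`):
`m_A (0,j) = (1,j)`, `m_A (1,j) = (0, p_y j)`, `m_A (2,j) = (3,j)`, `m_A (3,j) = (2, p_y⁻¹ j)`. -/
def mOrigamiA {d : ℕ} (py : Equiv.Perm (Fin d)) : Equiv.Perm (Fin 4 × Fin d) :=
  Equiv.prodShear (Equiv.swap 0 1 * Equiv.swap 2 3 : Equiv.Perm (Fin 4))
    (fun i => if i = 1 then py else if i = 3 then py⁻¹ else Equiv.refl (Fin d))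

/-- `m_B` of the M-Origami pair associated to `(p_x, p_y)`:
`m_B (0,j) = (2,j)`, `m_B (1,j) = (3,j)`, `m_B (2,j) = (0, p_x⁻¹ j)`, `m_B (3,j) = (1, p_x j)`. -/
def mOrigamiB {d : ℕ} (px : Equiv.Perm (Fin d)) : Equiv.Perm (Fin 4 × Fin d) :=
  Equiv.prodShear (Equiv.swap 0 2 * Equiv.swap 1 3 : Equiv.Perm (Fin 4))
    (fun i => if i = 2 then px⁻¹ else if i = 3 then px else Equiv.refl (Fin d))

/-- `c(σ)`: the number of orbits of the cyclic group generated by `σ`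
(i.e., the number of cycles of `σ`, counting fixed points as cycles of length 1). -/
noncomputable def cyc {S : Type*} (σ : Equiv.Perm S) : ℕ :=
  Nat.card (MulAction.orbitRel.Quotient (Subgroup.zpowers σ) S)

/-- `e(σ)`: the number of orbits of the cyclic group generated by `σ` of even cardinality. -/
noncomputable def evenCyc {S : Type*} (σ : Equiv.Perm S) : ℕ :=
  Nat.card {ω : MulAction.orbitRel.Quotient (Subgroup.zpowers σ) S // Even (Nat.card ω.orbit)}

section Aux

open MulAction

lemma mem_orbit_zpowers_iff' {S : Type*} {σ : Equiv.Perm S} {x y : S} :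
    y ∈ orbit (Subgroup.zpowers σ) x ↔ ∃ m : ℤ, σ ^ m • x = y := by
  rw [mem_orbit_iff]
  constructor
  · rintro ⟨⟨g, hg⟩, h⟩
    obtain ⟨m, rfl⟩ := Subgroup.mem_zpowers_iff.1 hg
    exact ⟨m, by rwa [Submonoid.mk_smul] at h⟩
  · rintro ⟨m, h⟩
    exact ⟨⟨σ ^ m, Subgroup.zpow_mem _ (Subgroup.mem_zpowers σ) m⟩, by rwa [Submonoid.mk_smul]⟩

lemma cyc_inv {S : Type*} (σ : Equiv.Perm S) : cyc σ⁻¹ = cyc σ := by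
  unfold cyc; rw [Subgroup.zpowers_inv]

lemma evenCyc_inv {S : Type*} (σ : Equiv.Perm S) : evenCyc σ⁻¹ = evenCyc σ := by
  unfold evenCyc; rw [Subgroup.zpowers_inv]

lemma nat_card_sigma {ι : Type*} [Fintype ι] (f : ι → Type*) [∀ i, Finite (f i)] :
    Nat.card (Σ i, f i) = ∑ i, Nat.card (f i) := by
  letI := fun i => Fintype.ofFinite (f i)
  simp [Nat.card_eq_fintype_card]

lemma orbit_card_eq {S : Type*} [Fintype S] (σ : Equiv.Perm S)
    (ω : orbitRel.Quotient (Subgroup.zpowers σ) S) :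
    Nat.card ω.orbit = Function.minimalPeriod (σ • ·) (Quotient.out ω) := by
  rw [orbitRel.Quotient.orbit_eq_orbit_out ω Quotient.out_eq',
    Nat.card_congr (orbitZPowersEquiv σ _), Nat.card_zmod]

/-- Squaring a permutation: each odd cycle stays a single cycle, each even cycle splits
in two, so `c(σ²) = c(σ) + e(σ)`. -/
lemma cyc_mul_self {S : Type*} [Fintype S] (σ : Equiv.Perm S) :
    cyc (σ * σ) = cyc σ + evenCyc σ := by
  classical
  set G := Subgroup.zpowers σ with hG
  set G2 := Subgroup.zpowers (σ * σ) with hG2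
  have hle : G2 ≤ G := Subgroup.zpowers_le.2 ⟨2, (zpow_two σ).symm ▸ rfl⟩
  let π : orbitRel.Quotient G2 S → orbitRel.Quotient G S :=
    Quotient.map' id (fun a b h => by
      rw [orbitRel_apply] at h ⊢
      obtain ⟨⟨g, hg⟩, h⟩ := mem_orbit_iff.1 h
      rw [Submonoid.mk_smul] at h
      exact mem_orbit_iff.2 ⟨⟨g, hle hg⟩, by rwa [Submonoid.mk_smul]⟩)
  have hπ : ∀ y : S, π (Quotient.mk'' y) = Quotient.mk'' y := fun y =>
    Quotient.map'_mk'' _ _ y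
  have hrep : ∀ q : orbitRel.Quotient G2 S, ∃ y : S, q = Quotient.mk'' y := fun q =>
    ⟨Quotient.out q, (Quotient.out_eq' q).symm⟩
  have fib : ∀ ω : orbitRel.Quotient G S,
      Nat.card {q : orbitRel.Quotient G2 S // π q = ω} =
        if Even (Nat.card ω.orbit) then 2 else 1 := by
    intro ω
    set x := Quotient.out ω with hxdef
    set n := Function.minimalPeriod (σ • ·) x with hn
    have hcard : Nat.card ω.orbit = n := orbit_card_eq σ ω
    have hn0 : n ≠ 0 := (NeZero.ne n)
    have hfix : ∀ m : ℤ, σ ^ m • x = x ↔ (n : ℤ) ∣ m := fun m =>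
      zpow_smul_eq_iff_minimalPeriod_dvd
    have htau : ∀ (k : ℤ) (y : S), (σ * σ) ^ k • y = σ ^ (2 * k) • y := by
      intro k y
      rw [← zpow_two, ← zpow_mul]
    have hmem : ∀ y : S, π (Quotient.mk'' y) = ω ↔ ∃ m : ℤ, σ ^ m • x = y := by
      intro y
      rw [hπ, ← orbitRel.Quotient.mem_orbit,
        orbitRel.Quotient.orbit_eq_orbit_out ω Quotient.out_eq', mem_orbit_zpowers_iff']
    have hx : π (Quotient.mk'' x) = ω := (hmem x).2 ⟨0, by simp⟩
    have hclass : ∀ m k : ℤ, σ ^ (2 * k + m) • x ∈ orbit G2 (σ ^ m • x) := by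
      intro m k
      refine mem_orbit_zpowers_iff'.2 ⟨k, ?_⟩
      rw [htau, ← mul_smul, ← zpow_add]
    rcases Nat.even_or_odd n with hev | hodd
    · rw [hcard, if_pos hev]
      rw [Nat.card_eq_two_iff]
      have hσx : π (Quotient.mk'' (σ • x)) = ω := (hmem _).2 ⟨1, by rw [zpow_one]⟩
      refine ⟨⟨Quotient.mk'' x, hx⟩, ⟨Quotient.mk'' (σ • x), hσx⟩, ?_, ?_⟩
      · intro hcon
        have h1 : Quotient.mk'' x = (Quotient.mk'' (σ • x) :
            orbitRel.Quotient G2 S) := congrArg Subtype.val hcon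
        have h2 : x ∈ orbit G2 (σ • x) := by
          rw [← orbitRel_apply]; exact Quotient.eq''.1 h1
        obtain ⟨k, hk⟩ := mem_orbit_zpowers_iff'.1 h2
        rw [htau, ← mul_smul] at hk
        rw [show σ ^ (2 * k) * σ = σ ^ (2 * k + 1) by rw [zpow_add, zpow_one]] at hk
        obtain ⟨t, ht⟩ := (hfix _).1 hk
        obtain ⟨s, hs⟩ := hev
        have ht' : 2 * k + 1 = ((s : ℤ) + s) * t := by rw [← Nat.cast_add, ← hs]; exact ht
        have h2d : (2 : ℤ) ∣ ((s : ℤ) + s) * t := ⟨s * t, by ring⟩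
        rw [← ht'] at h2d
        omega
      · rw [Set.eq_univ_iff_forall]
        rintro ⟨q, hq⟩
        obtain ⟨y, rfl⟩ := hrep q
        obtain ⟨m, rfl⟩ := (hmem y).1 hq
        rcases Int.even_or_odd m with ⟨k, hk⟩ | ⟨k, hk⟩
        · refine Set.mem_insert_iff.2 (Or.inl (Subtype.ext ?_))
          refine Quotient.sound' ?_
          rw [orbitRel_apply]
          have h0 := hclass 0 k
          rw [add_zero, zpow_zero, one_smul] at h0
          rwa [show m = 2 * k by omega]
        · refine Set.mem_insert_iff.2 (Or.inr (Set.mem_singleton_iff.2 (Subtype.ext ?_)))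
          refine Quotient.sound' ?_
          rw [orbitRel_apply]
          have h1 := hclass 1 k
          rw [zpow_one] at h1
          rwa [show m = 2 * k + 1 by omega]
    · rw [hcard, if_neg (by rw [Nat.even_iff, Nat.odd_iff.1 hodd]; omega)]
      rw [Nat.card_eq_one_iff_unique]
      obtain ⟨c, hc⟩ := hodd
      have key : ∀ m : ℤ, σ ^ m • x ∈ orbit G2 x := by
        intro m
        refine mem_orbit_zpowers_iff'.2 ⟨(c + 1) * m, ?_⟩
        rw [htau]
        have h2 : (2 : ℤ) * ((c + 1) * m) = m + n * m := by
          rw [hc]; push_cast; ring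
        rw [h2, zpow_add, mul_smul, (hfix _).2 (dvd_mul_right _ _)]
      refine ⟨⟨?_⟩, ⟨⟨Quotient.mk'' x, hx⟩⟩⟩
      rintro ⟨q, hq⟩ ⟨q', hq'⟩
      obtain ⟨y, rfl⟩ := hrep q
      obtain ⟨y', rfl⟩ := hrep q'
      obtain ⟨m, rfl⟩ := (hmem y).1 hq
      obtain ⟨m', rfl⟩ := (hmem y').1 hq'
      refine Subtype.ext (Quotient.sound' ?_)
      have r1 : (orbitRel G2 S) (σ ^ m • x) x := orbitRel_apply.2 (key m)
      have r2 : (orbitRel G2 S) (σ ^ m' • x) x := orbitRel_apply.2 (key m')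
      exact Setoid.trans' _ r1 (Setoid.symm' _ r2)
  letI : Fintype (orbitRel.Quotient G S) := Fintype.ofFinite _
  have hsum : Nat.card (orbitRel.Quotient G2 S) =
      ∑ ω : orbitRel.Quotient G S, Nat.card {q : orbitRel.Quotient G2 S // π q = ω} :=
    (Nat.card_congr (Equiv.sigmaFiberEquiv π).symm).trans (nat_card_sigma _)
  unfold cyc evenCyc
  rw [← hG, ← hG2, hsum]
  calc ∑ ω : orbitRel.Quotient G S, Nat.card {q : orbitRel.Quotient G2 S // π q = ω}
      = ∑ ω : orbitRel.Quotient G S, (1 + if Even (Nat.card ω.orbit) then 1 else 0) := by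
        refine Finset.sum_congr rfl fun ω _ => ?_
        rw [fib ω]; split <;> rfl
    _ = Fintype.card (orbitRel.Quotient G S) +
          Fintype.card {ω : orbitRel.Quotient G S // Even (Nat.card ω.orbit)} := by
        rw [Finset.sum_add_distrib, Finset.sum_const, Finset.sum_boole, Fintype.card_subtype]
        simp [Finset.card_univ]
    _ = Nat.card (orbitRel.Quotient G S) +
          Nat.card {ω : orbitRel.Quotient G S // Even (Nat.card ω.orbit)} := by
        rw [Nat.card_eq_fintype_card, Nat.card_eq_fintype_card]

/-- The monoid homomorphism sending a family of permutations of `β` indexed by `α` to the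
corresponding fibrewise permutation of `α × β`. -/
def shearHom (α β : Type*) : (α → Equiv.Perm β) →* Equiv.Perm (α × β) where
  toFun F := Equiv.prodShear (Equiv.refl α) F
  map_one' := by ext ⟨a, b⟩ <;> simp [Equiv.prodShear]
  map_mul' F G := by ext ⟨a, b⟩ <;> simp [Equiv.prodShear]

lemma shearHom_zpow {α β : Type*} (F : α → Equiv.Perm β) (m : ℤ) (a : α) (b : β) :
    ((shearHom α β F) ^ m) (a, b) = (a, ((F a) ^ m) b) := by
  rw [← map_zpow]
  rfl

/-- The cycle count of a fibrewise permutation is the sum of the fibre cycle counts. -/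
lemma cyc_shearHom {α β : Type*} [Fintype α] [Fintype β] (F : α → Equiv.Perm β) :
    cyc (shearHom α β F) = ∑ a, cyc (F a) := by
  classical
  let g : (Σ a : α, orbitRel.Quotient (Subgroup.zpowers (F a)) β) →
      orbitRel.Quotient (Subgroup.zpowers (shearHom α β F)) (α × β) := fun p =>
    Quotient.map' (fun b => (p.1, b)) (by
      intro b₁ b₂ h
      rw [orbitRel_apply] at h ⊢
      obtain ⟨m, rfl⟩ := mem_orbit_zpowers_iff'.1 h
      refine mem_orbit_zpowers_iff'.2 ⟨m, ?_⟩
      simp only [Equiv.Perm.smul_def]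
      rw [shearHom_zpow]) p.2
  have hbij : Function.Bijective g := by
    constructor
    · rintro ⟨a, q⟩ ⟨a', q'⟩ hgq
      obtain ⟨b, rfl⟩ : ∃ b, q = Quotient.mk'' b := ⟨Quotient.out q, (Quotient.out_eq' q).symm⟩
      obtain ⟨b', rfl⟩ : ∃ b, q' = Quotient.mk'' b := ⟨Quotient.out q', (Quotient.out_eq' q').symm⟩
      simp only [g, Quotient.map'_mk''] at hgq
      have h2 : (a, b) ∈ orbit (Subgroup.zpowers (shearHom α β F)) (a', b') := by
        rw [← orbitRel_apply]; exact Quotient.eq''.1 hgq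
      obtain ⟨m, hm⟩ := mem_orbit_zpowers_iff'.1 h2
      rw [Equiv.Perm.smul_def, shearHom_zpow, Prod.mk.injEq] at hm
      obtain ⟨rfl, hb⟩ : a' = a ∧ ((F a') ^ m) b' = b := ⟨hm.1, hm.2⟩
      congr 1
      refine Quotient.sound' ?_
      rw [orbitRel_apply]
      exact mem_orbit_zpowers_iff'.2 ⟨m, hb⟩
    · intro q
      obtain ⟨⟨a, b⟩, rfl⟩ : ∃ p, q = Quotient.mk'' p := ⟨Quotient.out q, (Quotient.out_eq' q).symm⟩
      exact ⟨⟨a, Quotient.mk'' b⟩, Quotient.map'_mk'' _ _ b⟩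
  unfold cyc
  rw [Nat.card_congr (Equiv.ofBijective g hbij).symm, nat_card_sigma]

lemma cyc_one (S : Type*) [Fintype S] : cyc (1 : Equiv.Perm S) = Fintype.card S := by
  classical
  unfold cyc
  rw [Nat.card_congr (Equiv.ofBijective (Quotient.mk'' :
      S → orbitRel.Quotient (Subgroup.zpowers (1 : Equiv.Perm S)) S) ⟨?_, ?_⟩).symm,
    Nat.card_eq_fintype_card]
  · intro x y h
    have := Quotient.eq''.1 h
    rw [orbitRel_apply] at this
    obtain ⟨m, hm⟩ := mem_orbit_zpowers_iff'.1 this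
    simpa using hm.symm
  · intro q
    exact ⟨Quotient.out q, Quotient.out_eq' q⟩

end Aux

/-- Genus formula for M-Origamis: with `g_Y` the Euler-formula genus of the dessin and
`g_X` the Euler-formula genus of the M-Origami, one has
`g_X = g_Y + d − (g₀ + g₁ + g_∞)/2` where `g₀, g₁, g_∞ = e(p_x), e(p_y), e(p_z)`. -/
theorem mOrigami_genus {d : ℕ} (hd : 1 ≤ d) (px py : Equiv.Perm (Fin d))
    (htrans : ∀ i j : Fin d,
      ∃ g ∈ Subgroup.closure ({px, py} : Set (Equiv.Perm (Fin d))), g i = j)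
    (pz : Equiv.Perm (Fin d)) (hpz : pz = px⁻¹ * py⁻¹)
    (K : Equiv.Perm (Fin 4 × Fin d))
    (hK : K = mOrigamiA py * mOrigamiB px * (mOrigamiA py)⁻¹ * (mOrigamiB px)⁻¹)
    (gY gX : ℚ)
    (hgY : gY = (2 + (d : ℚ) - cyc px - cyc py - cyc pz) / 2)
    (hgX : gX = (2 + 4 * (d : ℚ) - cyc K) / 2) :
    gX = gY + d - ((evenCyc px : ℚ) + evenCyc py + evenCyc pz) / 2 := by
  have hKF : K = shearHom (Fin 4) (Fin d) (fun i =>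
      if i = 0 then (py * px) * (py * px) else if i = 1 then px⁻¹ * px⁻¹
      else if i = 2 then py⁻¹ * py⁻¹ else 1) := by
    have hK' : shearHom (Fin 4) (Fin d) (fun i =>
        if i = 0 then (py * px) * (py * px) else if i = 1 then px⁻¹ * px⁻¹
        else if i = 2 then py⁻¹ * py⁻¹ else 1) * mOrigamiB px * mOrigamiA py
        = mOrigamiA py * mOrigamiB px := by
      ext ⟨i, j⟩
      · fin_cases i <;>
          simp [shearHom, mOrigamiA, mOrigamiB, Equiv.prodShear, Equiv.Perm.mul_apply,
            Equiv.swap_apply_def]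
      · fin_cases i <;>
          simp [shearHom, mOrigamiA, mOrigamiB, Equiv.prodShear, Equiv.Perm.mul_apply,
            Equiv.swap_apply_def]
    rw [hK, ← hK']
    group
  have hpzinv : py * px = pz⁻¹ := by rw [hpz, mul_inv_rev, inv_inv, inv_inv]
  have hcK : cyc K = (cyc pz + evenCyc pz) + (cyc px + evenCyc px)
      + (cyc py + evenCyc py) + d := by
    rw [hKF, cyc_shearHom, Fin.sum_univ_four]
    simp only [Fin.isValue, one_ne_zero, ↓reduceIte, Fin.reduceEq]
    rw [hpzinv, cyc_mul_self, cyc_mul_self, cyc_mul_self, cyc_one,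
      cyc_inv, evenCyc_inv, cyc_inv, evenCyc_inv, cyc_inv, evenCyc_inv,
      Fintype.card_fin]
  rw [hgX, hgY, hcK]
  push_cast
  ring
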